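/- arXiv:2104.11839 — 2 statements merged into one kernel-verified Lean document; each statement's English description precedes it below -/
import Mathlib

section
/- Let T : J → J (J ⊂ ℝ^d) satisfy ‖(DT(x))^{-1}‖ ≤ λ^{-1} with λ > 1, and let r satisfy (H1): ‖D(r∘h)(x)‖ ≤ C_4 for every inverse branch h of T. Set C_7 := max{2C_4ρ(1−λ^{-1})^{-1}, (1−λ^{-1})C_4} and 𝒞 := {(a,t) ∈ ℝ^d × ℝ : |t| ≤ C_7‖a‖}. Then for every x ∈ J the matrix 𝒟(x) = [[DT(x), 0], [−Dr(x), 1]] maps 𝒞 into 𝒞; consequently, 𝒟^n(x) = [[DT^n(x), 0], [−D(S_n r)(x), 1]] maps 𝒞 into 𝒞 for every x ∈ J and every n ≥ 1. -/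
/-!
Write `𝒟(x)(a, t) = (DT(x) a, t - Dr(x) a)` and `b = DT(x) a`. Since `a = DT(x)⁻¹ b`, we get
`‖a‖ ≤ λ⁻¹‖b‖` and, by (H1), `|Dr(x) a| ≤ C₄‖b‖`; hence `|t - Dr(x) a| ≤ (C₇λ⁻¹ + C₄)‖b‖`, and the
choice of `C₇` makes `C₇λ⁻¹ + C₄ ≤ C₇`. The statement for `𝒟^n` follows from the cocycle identity
`𝒟^{n+1}(x) = 𝒟(Tⁿx) 𝒟^n(x)`.
-/

open scoped BigOperators

noncomputable section

/-- The derivative cocycle `DT^n(x) = DT(T^{n-1}x) ∘ ⋯ ∘ DT(x)`. -/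
def Dcocycle {d : ℕ} (T : EuclideanSpace ℝ (Fin d) → EuclideanSpace ℝ (Fin d))
    (DT : EuclideanSpace ℝ (Fin d) → (EuclideanSpace ℝ (Fin d) →L[ℝ] EuclideanSpace ℝ (Fin d)))
    (x : EuclideanSpace ℝ (Fin d)) :
    ℕ → (EuclideanSpace ℝ (Fin d) →L[ℝ] EuclideanSpace ℝ (Fin d))
  | 0 => ContinuousLinearMap.id ℝ _
  | n + 1 => (DT (T^[n] x)).comp (Dcocycle T DT x n)

/-- The inverse cocycle `(DT^n(x))⁻¹ = DT(x)⁻¹ ∘ ⋯ ∘ DT(T^{n-1}x)⁻¹`. -/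
def DcocycleInv {d : ℕ} (T : EuclideanSpace ℝ (Fin d) → EuclideanSpace ℝ (Fin d))
    (DTinv : EuclideanSpace ℝ (Fin d) → (EuclideanSpace ℝ (Fin d) →L[ℝ] EuclideanSpace ℝ (Fin d)))
    (x : EuclideanSpace ℝ (Fin d)) :
    ℕ → (EuclideanSpace ℝ (Fin d) →L[ℝ] EuclideanSpace ℝ (Fin d))
  | 0 => ContinuousLinearMap.id ℝ _
  | n + 1 => (DcocycleInv T DTinv x n).comp (DTinv (T^[n] x))

/-- The derivative `D(S_n r)(x) = ∑_{j<n} Dr(T^j x) ∘ DT^j(x)` of the Birkhoff sum. -/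
def DBirkhoff {d : ℕ} (T : EuclideanSpace ℝ (Fin d) → EuclideanSpace ℝ (Fin d))
    (DT : EuclideanSpace ℝ (Fin d) → (EuclideanSpace ℝ (Fin d) →L[ℝ] EuclideanSpace ℝ (Fin d)))
    (Dr : EuclideanSpace ℝ (Fin d) → (EuclideanSpace ℝ (Fin d) →L[ℝ] ℝ))
    (x : EuclideanSpace ℝ (Fin d)) (n : ℕ) : EuclideanSpace ℝ (Fin d) →L[ℝ] ℝ :=
  ∑ j ∈ Finset.range n, (Dr (T^[j] x)).comp (Dcocycle T DT x j)

/-- The cone `𝒞 = {(a,t) ∈ ℝ^d × ℝ : |t| ≤ C₇ ‖a‖}`. -/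
def coneC {d : ℕ} (C₇ : ℝ) : Set ((EuclideanSpace ℝ (Fin d)) × ℝ) :=
  {p | |p.2| ≤ C₇ * ‖p.1‖}

/-- The block matrix `𝒟^n(x) = [[DT^n(x), 0], [−D(S_n r)(x), 1]]` acting on `ℝ^d × ℝ`. -/
def Dmat {d : ℕ} (T : EuclideanSpace ℝ (Fin d) → EuclideanSpace ℝ (Fin d))
    (DT : EuclideanSpace ℝ (Fin d) → (EuclideanSpace ℝ (Fin d) →L[ℝ] EuclideanSpace ℝ (Fin d)))
    (Dr : EuclideanSpace ℝ (Fin d) → (EuclideanSpace ℝ (Fin d) →L[ℝ] ℝ))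
    (x : EuclideanSpace ℝ (Fin d)) (n : ℕ) :
    ((EuclideanSpace ℝ (Fin d)) × ℝ) → ((EuclideanSpace ℝ (Fin d)) × ℝ) :=
  fun p => (Dcocycle T DT x n p.1, p.2 - DBirkhoff T DT Dr x n p.1)

/-- The image cone `𝒟^n(x)𝒞`. -/
def Dimage {d : ℕ} (T : EuclideanSpace ℝ (Fin d) → EuclideanSpace ℝ (Fin d))
    (DT : EuclideanSpace ℝ (Fin d) → (EuclideanSpace ℝ (Fin d) →L[ℝ] EuclideanSpace ℝ (Fin d)))
    (Dr : EuclideanSpace ℝ (Fin d) → (EuclideanSpace ℝ (Fin d) →L[ℝ] ℝ))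
    (C₇ : ℝ) (x : EuclideanSpace ℝ (Fin d)) (n : ℕ) :
    Set ((EuclideanSpace ℝ (Fin d)) × ℝ) :=
  Dmat T DT Dr x n '' coneC C₇

/-- Two sets `A, B ⊆ ℝ^d × ℝ` are transversal if `A ∩ B` contains no
`d`-dimensional linear subspace. -/
def Transversal {d : ℕ} (A B : Set ((EuclideanSpace ℝ (Fin d)) × ℝ)) : Prop :=
  ¬ ∃ V : Submodule ℝ ((EuclideanSpace ℝ (Fin d)) × ℝ),
      Module.finrank ℝ ↥V = d ∧ (V : Set ((EuclideanSpace ℝ (Fin d)) × ℝ)) ⊆ A ∩ B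


theorem abs_sub_le_mul_norm_of_comp_eq_id {E F : Type*} [NormedAddCommGroup E] [NormedSpace ℝ E]
    [NormedAddCommGroup F] [NormedSpace ℝ F] {A : E →L[ℝ] F} {B : F →L[ℝ] E} {L : E →L[ℝ] ℝ}
    {μ C C' : ℝ} (hBA : B.comp A = ContinuousLinearMap.id ℝ E) (hB : ‖B‖ ≤ μ)
    (hLB : ‖L.comp B‖ ≤ C) (hC' : 0 ≤ C') (hCC' : C + C' * μ ≤ C') {a : E} {t : ℝ}
    (ht : |t| ≤ C' * ‖a‖) : |t - L a| ≤ C' * ‖A a‖ := by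
  have ha : B (A a) = a := by simpa using congrArg (· a) hBA
  have hnorm : ‖a‖ ≤ μ * ‖A a‖ := by
    calc ‖a‖ = ‖B (A a)‖ := by rw [ha]
      _ ≤ ‖B‖ * ‖A a‖ := B.le_opNorm _
      _ ≤ μ * ‖A a‖ := by gcongr
  have hL : |L a| ≤ C * ‖A a‖ := by
    calc |L a| = ‖L.comp B (A a)‖ := by simp [ha]
      _ ≤ ‖L.comp B‖ * ‖A a‖ := (L.comp B).le_opNorm _
      _ ≤ C * ‖A a‖ := by gcongr
  calc |t - L a| ≤ |t| + |L a| := abs_sub _ _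
    _ ≤ C' * (μ * ‖A a‖) + C * ‖A a‖ := by gcongr; exact ht.trans (by gcongr)
    _ = (C + C' * μ) * ‖A a‖ := by ring
    _ ≤ C' * ‖A a‖ := by gcongr

theorem cone_constant_nonneg_and_add_mul_inv_le {lam rho C₄ C₇ : ℝ} (hlam : 1 < lam) (hrho : lam ≤ rho) (hC₄ : 0 ≤ C₄)
    (hC₇ : C₇ = max (2 * C₄ * rho * (1 - lam⁻¹)⁻¹) ((1 - lam⁻¹) * C₄)) :
    0 ≤ C₇ ∧ C₄ + C₇ * lam⁻¹ ≤ C₇ := by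
  have hgap : 0 < 1 - lam⁻¹ := sub_pos.2 (inv_lt_one_of_one_lt₀ hlam)
  have hleft : C₄ * (1 - lam⁻¹)⁻¹ ≤ C₇ := by
    rw [hC₇]
    refine le_trans ?_ (le_max_left _ _)
    gcongr
    nlinarith
  have hC₄C₇ : C₄ ≤ C₇ * (1 - lam⁻¹) := (div_le_iff₀ hgap).1 (by rwa [div_eq_mul_inv])
  exact ⟨le_trans (by positivity) hleft, by linarith⟩

section Dmat

variable {d : ℕ} (T : EuclideanSpace ℝ (Fin d) → EuclideanSpace ℝ (Fin d))
  (DT : EuclideanSpace ℝ (Fin d) → (EuclideanSpace ℝ (Fin d) →L[ℝ] EuclideanSpace ℝ (Fin d)))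
  (Dr : EuclideanSpace ℝ (Fin d) → (EuclideanSpace ℝ (Fin d) →L[ℝ] ℝ))

theorem Dmat_zero (x : EuclideanSpace ℝ (Fin d)) : Dmat T DT Dr x 0 = id := by
  funext p
  simp [Dmat, Dcocycle, DBirkhoff]

theorem Dmat_one_apply (x : EuclideanSpace ℝ (Fin d)) (p : EuclideanSpace ℝ (Fin d) × ℝ) :
    Dmat T DT Dr x 1 p = (DT x p.1, p.2 - Dr x p.1) := by
  simp [Dmat, Dcocycle, DBirkhoff]

theorem Dmat_succ (x : EuclideanSpace ℝ (Fin d)) (n : ℕ) :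
    Dmat T DT Dr x (n + 1) = Dmat T DT Dr (T^[n] x) 1 ∘ Dmat T DT Dr x n := by
  funext p
  simp only [Function.comp_apply, Dmat_one_apply]
  simp only [Dmat, Dcocycle, DBirkhoff, Finset.sum_range_succ, add_apply,
    ContinuousLinearMap.comp_apply]
  congr 1
  ring

theorem mapsTo_Dmat_of_forall_mapsTo_Dmat_one {J : Set (EuclideanSpace ℝ (Fin d))}
    {K : Set (EuclideanSpace ℝ (Fin d) × ℝ)} (hT : Set.MapsTo T J J)
    (hstep : ∀ y ∈ J, Set.MapsTo (Dmat T DT Dr y 1) K K) {x : EuclideanSpace ℝ (Fin d)}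
    (hx : x ∈ J) (n : ℕ) : Set.MapsTo (Dmat T DT Dr x n) K K := by
  induction n with
  | zero => rw [Dmat_zero]; exact Set.mapsTo_id K
  | succ n ih => rw [Dmat_succ]; exact (hstep _ (hT.iterate n hx)).comp ih

end Dmat

theorem stmt_7_general {d : ℕ}
    (J : Set (EuclideanSpace ℝ (Fin d)))
    (T : EuclideanSpace ℝ (Fin d) → EuclideanSpace ℝ (Fin d))
    (DT DTinv : EuclideanSpace ℝ (Fin d) → (EuclideanSpace ℝ (Fin d) →L[ℝ] EuclideanSpace ℝ (Fin d)))
    (Dr : EuclideanSpace ℝ (Fin d) → (EuclideanSpace ℝ (Fin d) →L[ℝ] ℝ))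
    (lam rho C₄ C₇ : ℝ) (hlam : 1 < lam) (hrho : lam ≤ rho)
    (hC₇ : C₇ = max (2 * C₄ * rho * (1 - lam⁻¹)⁻¹) ((1 - lam⁻¹) * C₄))
    (hTmaps : Set.MapsTo T J J)
    (hinv₁ : ∀ x ∈ J, (DTinv x).comp (DT x) = ContinuousLinearMap.id ℝ _)
    (hDTinv : ∀ x ∈ J, ‖DTinv x‖ ≤ lam⁻¹)
    (hH1 : ∀ x ∈ J, ‖(Dr x).comp (DTinv x)‖ ≤ C₄)
    : (∀ x ∈ J, Set.MapsTo (Dmat T DT Dr x 1) (coneC C₇) (coneC C₇)) ∧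
      (∀ x ∈ J, ∀ n : ℕ, 1 ≤ n → Set.MapsTo (Dmat T DT Dr x n) (coneC C₇) (coneC C₇)) := by
  have hstep : ∀ x ∈ J, Set.MapsTo (Dmat T DT Dr x 1) (coneC C₇) (coneC C₇) := by
    intro x hx p hp
    obtain ⟨hC₇0, hC₇step⟩ :=
      cone_constant_nonneg_and_add_mul_inv_le hlam hrho ((norm_nonneg _).trans (hH1 x hx)) hC₇
    show |(Dmat T DT Dr x 1 p).2| ≤ C₇ * ‖(Dmat T DT Dr x 1 p).1‖
    rw [Dmat_one_apply]
    exact abs_sub_le_mul_norm_of_comp_eq_id (hinv₁ x hx) (hDTinv x hx) (hH1 x hx) hC₇0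
      hC₇step hp
  exact ⟨hstep, fun x hx n _ => mapsTo_Dmat_of_forall_mapsTo_Dmat_one T DT Dr hTmaps hstep hx n⟩

/-- The cone `𝒞 = {(a,t) : |t| ≤ C₇‖a‖}` is invariant: for every `x ∈ J`
the matrix `𝒟(x) = [[DT(x),0],[−Dr(x),1]]` maps `𝒞` into `𝒞`, and consequently
`𝒟^n(x) = [[DT^n(x),0],[−D(S_n r)(x),1]]` maps `𝒞` into `𝒞` for every `n ≥ 1`. -/
theorem stmt_7 {d : ℕ}
    (J : Set (EuclideanSpace ℝ (Fin d)))
    (T : EuclideanSpace ℝ (Fin d) → EuclideanSpace ℝ (Fin d))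
    (DT DTinv : EuclideanSpace ℝ (Fin d) → (EuclideanSpace ℝ (Fin d) →L[ℝ] EuclideanSpace ℝ (Fin d)))
    (Dr : EuclideanSpace ℝ (Fin d) → (EuclideanSpace ℝ (Fin d) →L[ℝ] ℝ))
    (lam rho C₄ C₇ : ℝ) (hlam : 1 < lam) (hrho : lam ≤ rho)
    (hC₇ : C₇ = max (2 * C₄ * rho * (1 - lam⁻¹)⁻¹) ((1 - lam⁻¹) * C₄))
    (hTmaps : Set.MapsTo T J J)
    (hDT : ∀ x ∈ J, ‖DT x‖ ≤ rho)
    (hinv₁ : ∀ x ∈ J, (DTinv x).comp (DT x) = ContinuousLinearMap.id ℝ _)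
    (hinv₂ : ∀ x ∈ J, (DT x).comp (DTinv x) = ContinuousLinearMap.id ℝ _)
    (hDTinv : ∀ x ∈ J, ‖DTinv x‖ ≤ lam⁻¹)
    (hNinv : ∀ x ∈ J, ∀ n : ℕ, ‖DcocycleInv T DTinv x n‖ ≤ (lam ^ n)⁻¹)
    (hH1 : ∀ x ∈ J, ‖(Dr x).comp (DTinv x)‖ ≤ C₄)
    : (∀ x ∈ J, Set.MapsTo (Dmat T DT Dr x 1) (coneC C₇) (coneC C₇)) ∧
      (∀ x ∈ J, ∀ n : ℕ, 1 ≤ n → Set.MapsTo (Dmat T DT Dr x n) (coneC C₇) (coneC C₇)) :=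
  stmt_7_general J T DT DTinv Dr lam rho C₄ C₇ hlam hrho hC₇ hTmaps hinv₁ hDTinv hH1
end
end

section
/- Let y ∈ J, n ≥ 1, and let ω, ω̄ ∈ 𝒫^{(n)} with inverse branches h_ω, h_{ω̄} defined at y. If there exists a d-dimensional linear subspace E ⊂ ℝ^{d+1} contained in both image cones 𝒟^n(h_ω y)𝒞 and 𝒟^n(h_{ω̄} y)𝒞, then for every a ∈ ℝ^d one has |D(S_n r ∘ h_ω)(y)a − D(S_n r ∘ h_{ω̄})(y)a| ≤ 2 C_7 λ^{-n} ‖a‖. -/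
/-! The cone condition pins the last coordinate of each vector `(v, t) ∈ 𝒟^n(h y)𝒞` to within
`C₇ λ^{-n} ‖v‖` of `-D(S_n r ∘ h)(y) v`, because pulling back by `𝒟^n(h y)` contracts the first
coordinate by `λ^{-n}`. A `d`-dimensional subspace inside such a cone projects onto `ℝ^d`, so
every `a` is the first coordinate of one vector lying in both cones, and the triangle inequality
compares the two branches. -/

open scoped BigOperators

noncomputable section

section ConeEstimate

variable {E : Type*} [NormedAddCommGroup E] [NormedSpace ℝ E]

theorem abs_le_mul_mul_norm_of_mem_cone {A Ainv : E →L[ℝ] E} {C μ : ℝ}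
    (hA : Ainv.comp A = ContinuousLinearMap.id ℝ E) (hμ : ‖Ainv‖ ≤ μ) {v : E} {t : ℝ}
    (hvt : |t| ≤ C * ‖v‖) : |t| ≤ C * μ * ‖A v‖ := by
  have hv : v = Ainv (A v) := by rw [← ContinuousLinearMap.comp_apply, hA]; rfl
  rcases (norm_nonneg v).eq_or_lt with hv0 | hv0
  · have ht : |t| = 0 := le_antisymm (by simpa [← hv0] using hvt) (abs_nonneg t)
    simp [ht, norm_eq_zero.mp hv0.symm]
  · have hC : 0 ≤ C := nonneg_of_mul_nonneg_left ((abs_nonneg t).trans hvt) hv0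
    calc |t| ≤ C * ‖v‖ := hvt
      _ ≤ C * (μ * ‖A v‖) := by
          gcongr
          calc ‖v‖ = ‖Ainv (A v)‖ := congrArg norm hv
            _ ≤ ‖Ainv‖ * ‖A v‖ := Ainv.le_opNorm _
            _ ≤ μ * ‖A v‖ := by gcongr
      _ = C * μ * ‖A v‖ := by ring

/-- The projection `V → E` is injective since the estimate forces `p.2 = 0` when `p.1 = 0`,
hence onto by equality of dimensions. -/
theorem exists_mem_submodule_fst_eq [FiniteDimensional ℝ E] {V : Submodule ℝ (E × ℝ)}
    (hV : Module.finrank ℝ V = Module.finrank ℝ E) {L : E →L[ℝ] ℝ} {K : ℝ}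
    (hVL : ∀ p ∈ V, |p.2 + L p.1| ≤ K * ‖p.1‖) (a : E) : ∃ p ∈ V, p.1 = a := by
  let f : V →ₗ[ℝ] E := (LinearMap.fst ℝ E ℝ).comp V.subtype
  have hf : Function.Injective f := by
    rw [← LinearMap.ker_eq_bot, Submodule.eq_bot_iff]
    rintro ⟨p, hpV⟩ (hp1 : p.1 = 0)
    have hp2 := hVL p hpV
    rw [hp1, map_zero, add_zero, norm_zero, mul_zero, abs_nonpos_iff] at hp2
    exact Subtype.ext (Prod.ext hp1 hp2)
  obtain ⟨⟨p, hpV⟩, hpa⟩ := (LinearMap.injective_iff_surjective_of_finrank_eq_finrank hV).mp hf a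
  exact ⟨p, hpV, hpa⟩

theorem abs_sub_apply_le_of_forall_mem_submodule [FiniteDimensional ℝ E]
    {V : Submodule ℝ (E × ℝ)} (hV : Module.finrank ℝ V = Module.finrank ℝ E)
    {L₁ L₂ : E →L[ℝ] ℝ} {K₁ K₂ : ℝ}
    (hVL₁ : ∀ p ∈ V, |p.2 + L₁ p.1| ≤ K₁ * ‖p.1‖)
    (hVL₂ : ∀ p ∈ V, |p.2 + L₂ p.1| ≤ K₂ * ‖p.1‖) (a : E) :
    |L₁ a - L₂ a| ≤ (K₁ + K₂) * ‖a‖ := by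
  obtain ⟨p, hpV, rfl⟩ := exists_mem_submodule_fst_eq hV hVL₁ a
  calc |L₁ p.1 - L₂ p.1| = |(p.2 + L₁ p.1) - (p.2 + L₂ p.1)| := by ring_nf
    _ ≤ |p.2 + L₁ p.1| + |p.2 + L₂ p.1| := abs_sub _ _
    _ ≤ (K₁ + K₂) * ‖p.1‖ := by linarith [hVL₁ p hpV, hVL₂ p hpV]

end ConeEstimate

section Cocycle

variable {d : ℕ} {J : Set (EuclideanSpace ℝ (Fin d))}
  {T : EuclideanSpace ℝ (Fin d) → EuclideanSpace ℝ (Fin d)}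
  {DT DTinv : EuclideanSpace ℝ (Fin d) → (EuclideanSpace ℝ (Fin d) →L[ℝ] EuclideanSpace ℝ (Fin d))}

theorem DcocycleInv_comp_Dcocycle (hTmaps : Set.MapsTo T J J)
    (hinv : ∀ x ∈ J, (DTinv x).comp (DT x) = ContinuousLinearMap.id ℝ _)
    {x : EuclideanSpace ℝ (Fin d)} (hx : x ∈ J) (n : ℕ) :
    (DcocycleInv T DTinv x n).comp (Dcocycle T DT x n) = ContinuousLinearMap.id ℝ _ := by
  induction n with
  | zero => rfl
  | succ n ih =>
    rw [Dcocycle, DcocycleInv, ContinuousLinearMap.comp_assoc,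
      ← ContinuousLinearMap.comp_assoc (DTinv _), hinv _ (hTmaps.iterate n hx),
      ContinuousLinearMap.id_comp, ih]

theorem abs_add_DBirkhoff_comp_DcocycleInv_le_of_mem_Dimage
    {Dr : EuclideanSpace ℝ (Fin d) → (EuclideanSpace ℝ (Fin d) →L[ℝ] ℝ)} {C μ : ℝ}
    {x : EuclideanSpace ℝ (Fin d)} {n : ℕ}
    (hleft : (DcocycleInv T DTinv x n).comp (Dcocycle T DT x n) = ContinuousLinearMap.id ℝ _)
    (hμ : ‖DcocycleInv T DTinv x n‖ ≤ μ) {p : EuclideanSpace ℝ (Fin d) × ℝ}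
    (hp : p ∈ Dimage T DT Dr C x n) :
    |p.2 + ((DBirkhoff T DT Dr x n).comp (DcocycleInv T DTinv x n)) p.1| ≤ C * μ * ‖p.1‖ := by
  obtain ⟨⟨v, t⟩, hvt, rfl⟩ := hp
  have hv : DcocycleInv T DTinv x n (Dcocycle T DT x n v) = v := by
    rw [← ContinuousLinearMap.comp_apply, hleft]; rfl
  simp only [Dmat, ContinuousLinearMap.comp_apply, hv, sub_add_cancel]
  exact abs_le_mul_mul_norm_of_mem_cone hleft hμ hvt

end Cocycle

theorem stmt_8_general {d : ℕ}
    (J : Set (EuclideanSpace ℝ (Fin d)))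
    (T : EuclideanSpace ℝ (Fin d) → EuclideanSpace ℝ (Fin d))
    (DT DTinv : EuclideanSpace ℝ (Fin d) → (EuclideanSpace ℝ (Fin d) →L[ℝ] EuclideanSpace ℝ (Fin d)))
    (Dr : EuclideanSpace ℝ (Fin d) → (EuclideanSpace ℝ (Fin d) →L[ℝ] ℝ))
    (lam C₇ : ℝ)
    (hTmaps : Set.MapsTo T J J)
    (hinv₁ : ∀ x ∈ J, (DTinv x).comp (DT x) = ContinuousLinearMap.id ℝ _)
    (hNinv : ∀ x ∈ J, ∀ n : ℕ, ‖DcocycleInv T DTinv x n‖ ≤ (lam ^ n)⁻¹)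
    (n : ℕ) (y₁ y₂ : EuclideanSpace ℝ (Fin d)) (hy₁ : y₁ ∈ J) (hy₂ : y₂ ∈ J)
    (hE : ∃ V : Submodule ℝ ((EuclideanSpace ℝ (Fin d)) × ℝ),
        Module.finrank ℝ ↥V = d ∧
        (V : Set ((EuclideanSpace ℝ (Fin d)) × ℝ)) ⊆
          Dimage T DT Dr C₇ y₁ n ∩ Dimage T DT Dr C₇ y₂ n) :
    ∀ a : EuclideanSpace ℝ (Fin d),
      |((DBirkhoff T DT Dr y₁ n).comp (DcocycleInv T DTinv y₁ n)) a -
        ((DBirkhoff T DT Dr y₂ n).comp (DcocycleInv T DTinv y₂ n)) a| ≤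
        2 * C₇ * (lam ^ n)⁻¹ * ‖a‖ := by
  intro a
  obtain ⟨V, hVrank, hVsub⟩ := hE
  have hcone {y : EuclideanSpace ℝ (Fin d)} (hy : y ∈ J) {p} (hp : p ∈ Dimage T DT Dr C₇ y n) :=
    abs_add_DBirkhoff_comp_DcocycleInv_le_of_mem_Dimage
      (DcocycleInv_comp_Dcocycle hTmaps hinv₁ hy n) (hNinv y hy n) hp
  calc _ ≤ (C₇ * (lam ^ n)⁻¹ + C₇ * (lam ^ n)⁻¹) * ‖a‖ :=
        abs_sub_apply_le_of_forall_mem_submodule (by rw [hVrank, finrank_euclideanSpace_fin])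
          (fun p hp => hcone hy₁ (hVsub hp).1) (fun p hp => hcone hy₂ (hVsub hp).2) a
    _ = 2 * C₇ * (lam ^ n)⁻¹ * ‖a‖ := by ring

/-- Let `y ∈ J` and `ω, ω̄ ∈ 𝒫^{(n)}` with inverse branches defined at
`y`; write `y₁ = h_ω(y)`, `y₂ = h_{ω̄}(y)` (so `T^n y₁ = T^n y₂ = y`). If some
`d`-dimensional subspace `E ⊆ ℝ^{d+1}` is contained in both image cones `𝒟^n(y₁)𝒞` and
`𝒟^n(y₂)𝒞`, then `|D(S_n r∘h_ω)(y)a − D(S_n r∘h_{ω̄})(y)a| ≤ 2C₇λ^{-n}‖a‖` for every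
`a ∈ ℝ^d`, where `D(S_n r∘h_ω)(y) = D(S_n r)(y₁) ∘ (DT^n(y₁))⁻¹`. -/
theorem stmt_8 {d : ℕ}
    (J : Set (EuclideanSpace ℝ (Fin d)))
    (T : EuclideanSpace ℝ (Fin d) → EuclideanSpace ℝ (Fin d))
    (DT DTinv : EuclideanSpace ℝ (Fin d) → (EuclideanSpace ℝ (Fin d) →L[ℝ] EuclideanSpace ℝ (Fin d)))
    (Dr : EuclideanSpace ℝ (Fin d) → (EuclideanSpace ℝ (Fin d) →L[ℝ] ℝ))
    (lam rho C₄ C₇ : ℝ) (hlam : 1 < lam) (hrho : lam ≤ rho)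
    (hC₇ : C₇ = max (2 * C₄ * rho * (1 - lam⁻¹)⁻¹) ((1 - lam⁻¹) * C₄))
    (hTmaps : Set.MapsTo T J J)
    (hDT : ∀ x ∈ J, ‖DT x‖ ≤ rho)
    (hinv₁ : ∀ x ∈ J, (DTinv x).comp (DT x) = ContinuousLinearMap.id ℝ _)
    (hinv₂ : ∀ x ∈ J, (DT x).comp (DTinv x) = ContinuousLinearMap.id ℝ _)
    (hDTinv : ∀ x ∈ J, ‖DTinv x‖ ≤ lam⁻¹)
    (hNinv : ∀ x ∈ J, ∀ n : ℕ, ‖DcocycleInv T DTinv x n‖ ≤ (lam ^ n)⁻¹)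
    (hH1 : ∀ x ∈ J, ‖(Dr x).comp (DTinv x)‖ ≤ C₄)
    (n : ℕ) (y₁ y₂ : EuclideanSpace ℝ (Fin d)) (hy₁ : y₁ ∈ J) (hy₂ : y₂ ∈ J)
    (hsame : T^[n] y₁ = T^[n] y₂)
    (hE : ∃ V : Submodule ℝ ((EuclideanSpace ℝ (Fin d)) × ℝ),
        Module.finrank ℝ ↥V = d ∧
        (V : Set ((EuclideanSpace ℝ (Fin d)) × ℝ)) ⊆
          Dimage T DT Dr C₇ y₁ n ∩ Dimage T DT Dr C₇ y₂ n) :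
    ∀ a : EuclideanSpace ℝ (Fin d),
      |((DBirkhoff T DT Dr y₁ n).comp (DcocycleInv T DTinv y₁ n)) a -
        ((DBirkhoff T DT Dr y₂ n).comp (DcocycleInv T DTinv y₂ n)) a| ≤
        2 * C₇ * (lam ^ n)⁻¹ * ‖a‖ :=
  stmt_8_general J T DT DTinv Dr lam C₇ hTmaps hinv₁ hNinv n y₁ y₂ hy₁ hy₂ hE
end
end
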